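/- The ℝ-indexed persistence module M = ∏_{n ∈ ℕ} C([0, 1/n)) is upper semi-continuous, but its pointwise dual M* (indexed by ℝ^op) is not lower semi-continuous at 0: the canonical map colim_{s<0 in ℝ^op} (M*)_s → (M*)_0 is not an isomorphism, since the colimit is isomorphic to ⊕_{n∈ℕ} 𝔽 while (M*)_0 ≅ Hom(∏_{n∈ℕ} 𝔽, 𝔽), and no infinite dimensional vector space is isomorphic to its double dual. -/

import Mathlib

open CategoryTheory CategoryTheory.Limits

set_option maxHeartbeats 1000000
set_option synthInstance.maxHeartbeats 200000

/-- A persistence module over a totally ordered set `T`: a functor from `T` (viewed as a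
category via its order) to the category of `F`-vector spaces. -/
abbrev PersistenceModule (F : Type) [Field F] (T : Type) [LinearOrder T] :=
  T ⥤ ModuleCat.{0} F

variable (F : Type) [Field F] (T : Type) [LinearOrder T]

/-- The inclusion functor of the strict up-set of `t` into `T`. -/
def upFunctor (t : T) : {s : T // t < s} ⥤ T :=
  Monotone.functor (f := (Subtype.val : {s : T // t < s} → T)) (fun _ _ h => h)

/-- The inclusion functor of the strict down-set of `t` into `T`. -/
def downFunctor (t : T) : {s : T // s < t} ⥤ T :=
  Monotone.functor (f := (Subtype.val : {s : T // s < t} → T)) (fun _ _ h => h)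

/-- `underline M`, with `(underline M)_t = lim_{s > t} M_s` (the limit over the empty
category being `0`). -/
noncomputable def underlinePM (M : PersistenceModule F T) : PersistenceModule F T where
  obj t := limit (upFunctor T t ⋙ M)
  map {s t} f := limit.lift (upFunctor T t ⋙ M)
    { pt := limit (upFunctor T s ⋙ M)
      π :=
        { app := fun u => limit.π (upFunctor T s ⋙ M) ⟨u.1, lt_of_le_of_lt (leOfHom f) u.2⟩
          naturality := fun u v g => by
            dsimp
            exact (Category.id_comp _).trans (limit.w (upFunctor T s ⋙ M) (homOfLE (leOfHom g))).symm } }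
  map_id t := by
    apply limit.hom_ext
    intro u
    simp
  map_comp {s t u} f g := by
    apply limit.hom_ext
    intro v
    simp
    erw [limit.lift_π]

/-- `overline M`, with `(overline M)_t = colim_{s < t} M_s` (the colimit over the empty
category being `0`). -/
noncomputable def overlinePM (M : PersistenceModule F T) : PersistenceModule F T where
  obj t := colimit (downFunctor T t ⋙ M)
  map {s t} f := colimit.desc (downFunctor T s ⋙ M)
    { pt := colimit (downFunctor T t ⋙ M)
      ι :=
        { app := fun u => colimit.ι (downFunctor T t ⋙ M) ⟨u.1, lt_of_lt_of_le u.2 (leOfHom f)⟩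
          naturality := fun u v g => by
            dsimp
            refine Eq.trans ?_ (Category.comp_id _).symm
            have h : (⟨u.1, lt_of_lt_of_le u.2 (leOfHom f)⟩ : {x : T // x < t}) ⟶
                ⟨v.1, lt_of_lt_of_le v.2 (leOfHom f)⟩ := homOfLE (leOfHom g)
            exact colimit.w (downFunctor T t ⋙ M) h } }
  map_id t := by
    apply colimit.hom_ext
    intro u
    simp
  map_comp {s t u} f g := by
    apply colimit.hom_ext
    intro v
    simp
    erw [colimit.ι_desc]

/-- The canonical morphism `M ⟶ underline M` given by the universal property of the limits. -/
noncomputable def toUnderline (M : PersistenceModule F T) : M ⟶ underlinePM F T M where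
  app t := limit.lift (upFunctor T t ⋙ M)
    { pt := M.obj t
      π :=
        { app := fun u => M.map (homOfLE u.2.le)
          naturality := fun u v g => by
            dsimp
            rw [Category.id_comp, ← M.map_comp]
            rfl } }
  naturality s t f := by
    apply limit.hom_ext
    intro u
    simp only [underlinePM, Category.assoc, limit.lift_π, ← M.map_comp]
    erw [limit.lift_π]
    rfl

/-- The canonical morphism `overline M ⟶ M` given by the universal property of the colimits. -/
noncomputable def fromOverline (M : PersistenceModule F T) : overlinePM F T M ⟶ M where
  app t := colimit.desc (downFunctor T t ⋙ M)
    { pt := M.obj t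
      ι :=
        { app := fun u => M.map (homOfLE u.2.le)
          naturality := fun u v g => by
            dsimp
            rw [Category.comp_id, ← M.map_comp]
            rfl } }
  naturality s t f := by
    apply colimit.hom_ext
    intro u
    simp only [overlinePM, colimit.ι_desc_assoc, colimit.ι_desc, ← M.map_comp]
    erw [colimit.ι_desc]
    rfl

/-- `M` is upper semi-continuous if the canonical map `M_t → lim_{s > t} M_s` is an
isomorphism for all `t`. -/
noncomputable def IsUSC (M : PersistenceModule F T) : Prop :=
  ∀ t : T, IsIso ((toUnderline F T M).app t)

/-- `M` is lower semi-continuous if the canonical map `colim_{s < t} M_s → M_t` is an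
isomorphism for all `t`. -/
noncomputable def IsLSC (M : PersistenceModule F T) : Prop :=
  ∀ t : T, IsIso ((fromOverline F T M).app t)

/-- `M` is ephemeral if all structure maps `M_{s,t}` with `s < t` vanish. -/
def Ephemeral (M : PersistenceModule F T) : Prop :=
  ∀ s t : T, ∀ h : s < t, M.map (homOfLE h.le) = 0

/-- `M` is q-tame if all structure maps `M_{s,t}` with `s < t` have finite rank. -/
def QTame (M : PersistenceModule F T) : Prop :=
  ∀ s t : T, ∀ h : s < t, Module.Finite F (LinearMap.range (M.map (homOfLE h.le)).hom)

/-- A morphism of persistence modules is a weak isomorphism if its kernel and cokernel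
are ephemeral. -/
noncomputable def IsWeakIso {M N : PersistenceModule F T} (φ : M ⟶ N) : Prop :=
  Ephemeral F T (kernel φ) ∧ Ephemeral F T (cokernel φ)

open Classical

/-- The interval module `C(I)`: the field `F` at points of `I` with identity structure
maps inside `I`, and `0` elsewhere (in particular `C(∅) = 0`). -/
noncomputable def intervalModule (I : Set T) : PersistenceModule F T where
  obj t := ModuleCat.of F (↥(if t ∈ I then (⊤ : Submodule F F) else (⊥ : Submodule F F)))
  map {s t} f :=
    if h : Set.Icc s t ⊆ I then
      ModuleCat.ofHom (Submodule.inclusion (by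
        rw [if_pos (h (Set.right_mem_Icc.mpr (leOfHom f)))]
        exact le_top))
    else 0
  map_id t := by
    by_cases ht : t ∈ I
    · rw [dif_pos (by simpa using ht)]
      rfl
    · have h : ¬ Set.Icc t t ⊆ I := by simpa using ht
      rw [dif_neg h]
      have hs : Subsingleton (↥(if t ∈ I then (⊤ : Submodule F F) else (⊥ : Submodule F F))) := by
        rw [if_neg ht]
        infer_instance
      apply ModuleCat.hom_ext
      apply LinearMap.ext
      intro x
      exact @Subsingleton.elim _ hs _ _
  map_comp {s t u} f g := by
    by_cases h : Set.Icc s u ⊆ I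
    · have h1 : Set.Icc s t ⊆ I :=
        fun x hx => h ⟨hx.1, le_trans hx.2 (leOfHom g)⟩
      have h2 : Set.Icc t u ⊆ I :=
        fun x hx => h ⟨le_trans (leOfHom f) hx.1, hx.2⟩
      rw [dif_pos h, dif_pos h1, dif_pos h2]
      rfl
    · rw [dif_neg h]
      by_cases h1 : Set.Icc s t ⊆ I
      · have h2 : ¬ Set.Icc t u ⊆ I := fun h2 => h (by
          intro x hx
          rcases le_total x t with hxt | htx
          · exact h1 ⟨hx.1, hxt⟩
          · exact h2 ⟨htx, hx.2⟩)
        rw [dif_pos h1, dif_neg h2, Limits.comp_zero]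
      · rw [dif_neg h1, Limits.zero_comp]

/-- Functoriality of `overline` on morphisms. -/
noncomputable def overlineMap {M N : PersistenceModule F T} (φ : M ⟶ N) :
    overlinePM F T M ⟶ overlinePM F T N where
  app t := colimMap (Functor.whiskerLeft (downFunctor T t) φ)
  naturality s t f := by
    apply colimit.hom_ext
    intro u
    simp [overlinePM]
    erw [ι_colimMap]
    rfl

/-- Functoriality of `underline` on morphisms. -/
noncomputable def underlineMap {M N : PersistenceModule F T} (φ : M ⟶ N) :
    underlinePM F T M ⟶ underlinePM F T N where
  app t := limMap (Functor.whiskerLeft (upFunctor T t) φ)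
  naturality s t f := by
    apply limit.hom_ext
    intro u
    simp [underlinePM]
    erw [limMap_π]
    rfl

/-- The radical of a persistence module: the image of the canonical morphism
`overline M ⟶ M`. -/
noncomputable def radPM (M : PersistenceModule F T) : PersistenceModule F T :=
  image (fromOverline F T M)

/-- The canonical morphism from the direct sum to the product of a collection of
persistence modules. -/
noncomputable def sumToProd {A : Type} (M : A → PersistenceModule F T) :
    (∐ M) ⟶ (∏ᶜ M) :=
  Sigma.desc fun a => Pi.lift fun b =>
    if h : a = b then eqToHom (congrArg M h) else 0

/-- The pointwise dual persistence module `M*`, indexed by the opposite order. -/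
noncomputable def dualPM (M : PersistenceModule F T) : PersistenceModule F Tᵒᵈ where
  obj t := ModuleCat.of F (Module.Dual F (M.obj (OrderDual.ofDual t)))
  map {s t} f :=
    ModuleCat.ofHom (M.map (homOfLE (leOfHom f : OrderDual.ofDual t ≤ OrderDual.ofDual s))).hom.dualMap
  map_id t := by
    rw [show (homOfLE _ : OrderDual.ofDual t ⟶ OrderDual.ofDual t) = 𝟙 _ from rfl,
      M.map_id]
    rfl
  map_comp {s t u} f g := by
    rw [show (homOfLE _ : OrderDual.ofDual u ⟶ OrderDual.ofDual s) =
        (homOfLE (leOfHom g : OrderDual.ofDual u ≤ OrderDual.ofDual t)) ≫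
        (homOfLE (leOfHom f : OrderDual.ofDual t ≤ OrderDual.ofDual s)) from rfl,
      M.map_comp]
    rfl

/-- `I` is an interval in a totally ordered set: if `s ≤ t ≤ u` with `s, u ∈ I`, then `t ∈ I`. -/
def IsInterval {T : Type*} [LinearOrder T] (I : Set T) : Prop :=
  ∀ ⦃s t u : T⦄, s ≤ t → t ≤ u → s ∈ I → u ∈ I → t ∈ I

/-- `underline I`: the set of `t` such that `I ∩ {s | t < s}` is nonempty and coinitial
in `{s | t < s}`. -/
def underlineSet {T : Type*} [LinearOrder T] (I : Set T) : Set T :=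
  {t | (I ∩ Set.Ioi t).Nonempty ∧ ∀ s ∈ Set.Ioi t, ∃ u ∈ I ∩ Set.Ioi t, u ≤ s}

/-- `overline I`: the set of `t` such that `I ∩ {s | s < t}` is nonempty and cofinal
in `{s | s < t}`. -/
def overlineSet {T : Type*} [LinearOrder T] (I : Set T) : Set T :=
  {t | (I ∩ Set.Iio t).Nonempty ∧ ∀ s ∈ Set.Iio t, ∃ u ∈ I ∩ Set.Iio t, s ≤ u}

/-- `rad I = I ∩ overline I`. -/
def radSet {T : Type*} [LinearOrder T] (I : Set T) : Set T :=
  I ∩ overlineSet I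

/-!
Upper semi-continuity is checked factor by factor. A product of upper semi-continuous modules is
upper semi-continuous, because `lim_{s > t}` commutes with products. `C([a, b))` is upper
semi-continuous because for every `t` there is an `s₀ > t` such that all structure maps
`M_t → M_s` with `s ∈ (t, s₀]` are isomorphisms, so that `M_t → M_{s₀}` computes the limit.

For the dual, surjectivity of `colim_{s > 0} (M_s)^* → (M_0)^*` would mean that every functional
on `M_0 = ∏ₙ 𝔽` factors through some `M_0 → M_s` with `s > 0`. Such a functional vanishes on the
unit vector `eₙ` once `1/(n+1) < s`. A functional equal to `1` on all the (linearly independent)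
`eₙ` therefore does not factor in this way.
-/

theorem isIso_of_isIso_comp_of_mono {C : Type*} [Category C] {X Y Z : C} (f : X ⟶ Y) (g : Y ⟶ Z)
    (hfg : IsIso (f ≫ g)) (hg : Mono g) : IsIso f := by
  have : IsSplitEpi g := IsSplitEpi.mk' ⟨inv (f ≫ g) ≫ f, by simp⟩
  have := isIso_of_mono_of_isSplitEpi g
  exact IsIso.of_isIso_comp_right f g

section Semicontinuity

variable {F T}

theorem isIso_toUnderline_app_of_isIso_map {M : PersistenceModule F T} {t s₀ : T} (hts₀ : t < s₀)
    (hiso : ∀ s (hts : t < s), s ≤ s₀ → IsIso (M.map (homOfLE hts.le))) :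
    IsIso ((toUnderline F T M).app t) := by
  have hπ : ∀ u v : {s : T // t < s}, (h : u.1 ≤ v.1) →
      limit.π (upFunctor T t ⋙ M) u ≫ M.map (homOfLE h) = limit.π (upFunctor T t ⋙ M) v :=
    fun u v h => limit.w (upFunctor T t ⋙ M) (homOfLE h)
  have hcomp : ∀ {a b c : T} (hab : a ≤ b) (hbc : b ≤ c),
      M.map (homOfLE hab) ≫ M.map (homOfLE hbc) = M.map (homOfLE (hab.trans hbc)) :=
    fun _ _ => by rw [← M.map_comp, homOfLE_comp]
  obtain ⟨g, hg, hg'⟩ := (hiso s₀ hts₀ le_rfl).out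
  show IsIso (limit.lift (upFunctor T t ⋙ M) _)
  refine ⟨⟨limit.π (upFunctor T t ⋙ M) ⟨s₀, hts₀⟩ ≫ g, ?_, limit.hom_ext fun u => ?_⟩⟩
  · exact (limit.lift_π_assoc _ _ _).trans hg
  simp only [Category.assoc, limit.lift_π, Category.id_comp]
  show _ ≫ g ≫ M.map (homOfLE u.2.le) = _
  rcases le_total s₀ u.1 with hs₀u | hus₀
  · rw [← hcomp hts₀.le hs₀u, reassoc_of% hg']
    exact hπ _ u hs₀u
  · obtain ⟨k, hk, hk'⟩ := (hiso u.1 u.2 hus₀).out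
    have hus₀_eq : M.map (homOfLE hus₀) = k ≫ M.map (homOfLE hts₀.le) := by
      rw [← hcomp u.2.le hus₀, ← Category.assoc, hk', Category.id_comp]
    have key : M.map (homOfLE hus₀) ≫ g ≫ M.map (homOfLE u.2.le) = 𝟙 _ := by
      rw [hus₀_eq, Category.assoc, reassoc_of% hg, hk']
    rw [← hπ u ⟨s₀, hts₀⟩ hus₀, Category.assoc]
    exact (congrArg _ key).trans (Category.comp_id _)

theorem intervalModule_obj_subsingleton {I : Set T} {t : T} (ht : t ∉ I) :
    Subsingleton ((intervalModule F T I).obj t) := by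
  change Subsingleton ↥(if t ∈ I then (⊤ : Submodule F F) else ⊥)
  rw [if_neg ht]
  infer_instance

theorem intervalModule_obj_nontrivial {I : Set T} {t : T} (ht : t ∈ I) :
    Nontrivial ((intervalModule F T I).obj t) := by
  change Nontrivial ↥(if t ∈ I then (⊤ : Submodule F F) else ⊥)
  rw [if_pos ht]
  exact Submodule.topEquiv.toEquiv.nontrivial

theorem isIso_intervalModule_map_of_Icc_subset {I : Set T} {s t : T} (hst : s ≤ t)
    (hI : Set.Icc s t ⊆ I) : IsIso ((intervalModule F T I).map (homOfLE hst)) := by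
  have hs : s ∈ I := hI (Set.left_mem_Icc.2 hst)
  rw [ConcreteCategory.isIso_iff_bijective]
  dsimp only [intervalModule]
  rw [dif_pos hI]
  refine ⟨fun x y h => Subtype.ext ?_, fun y => ⟨⟨y.1, by rw [if_pos hs]; trivial⟩, rfl⟩⟩
  exact (congrArg Subtype.val h :)

theorem isIso_intervalModule_map_of_notMem {I : Set T} {s t : T} (hst : s ≤ t) (hs : s ∉ I)
    (ht : t ∉ I) : IsIso ((intervalModule F T I).map (homOfLE hst)) := by
  have := intervalModule_obj_subsingleton (F := F) hs
  have := intervalModule_obj_subsingleton (F := F) ht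
  exact isIso_of_source_target_iso_zero _ (ModuleCat.isZero_of_subsingleton _).isoZero
    (ModuleCat.isZero_of_subsingleton _).isoZero

theorem isUSC_intervalModule_Ico [DenselyOrdered T] [NoMaxOrder T] (a b : T) :
    IsUSC F T (intervalModule F T (Set.Ico a b)) := by
  intro t
  rcases lt_or_ge t a with hta | hat
  · obtain ⟨s₀, hts₀, hs₀a⟩ := exists_between hta
    exact isIso_toUnderline_app_of_isIso_map hts₀ fun s hts hss₀ =>
      isIso_intervalModule_map_of_notMem _ (fun h => hta.not_ge h.1)
        (fun h => (hss₀.trans_lt hs₀a).not_ge h.1)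
  rcases lt_or_ge t b with htb | hbt
  · obtain ⟨s₀, hts₀, hs₀b⟩ := exists_between htb
    exact isIso_toUnderline_app_of_isIso_map hts₀ fun s hts hss₀ =>
      isIso_intervalModule_map_of_Icc_subset _ fun x hx =>
        ⟨hat.trans hx.1, hx.2.trans_lt (hss₀.trans_lt hs₀b)⟩
  · obtain ⟨s₀, hts₀⟩ := exists_gt t
    exact isIso_toUnderline_app_of_isIso_map hts₀ fun s hts _ =>
      isIso_intervalModule_map_of_notMem _ (fun h => h.2.not_ge hbt)
        (fun h => h.2.not_ge (hbt.trans hts.le))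

theorem isUSC_pi {ι : Type} (M : ι → PersistenceModule F T) (hM : ∀ i, IsUSC F T (M i)) :
    IsUSC F T (∏ᶜ M) := by
  intro t
  let L := Pi.lift fun i => limMap (Functor.whiskerLeft (upFunctor T t) (Pi.π M i))
  have hsq : (toUnderline F T (∏ᶜ M)).app t ≫ L =
      (piObjIso M t).hom ≫ Limits.Pi.map fun i => (toUnderline F T (M i)).app t := by
    refine Pi.hom_ext _ _ fun i => limit.hom_ext fun u => ?_
    dsimp only [underlinePM, toUnderline]
    simp only [L, Category.assoc, limit.lift_π, Fan.mk_π_app, limit.lift_map,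
      Cone.postcompose_obj_π, NatTrans.comp_app, Functor.whiskerLeft_app, NatTrans.naturality]
    -- `erw`: the legs of the cone in `toUnderline` are typed at `u.1`, not `(upFunctor T t).obj u`
    erw [Limits.Pi.map_π_assoc, piObjIso_hom_comp_π_assoc, limit.lift_π]
  have hL : Mono L := by
    refine ⟨fun a b hab => limit.hom_ext fun u => ?_⟩
    apply (cancel_mono (piObjIso M ((upFunctor T t).obj u)).hom).1
    refine Pi.hom_ext _ _ fun i => ?_
    have := (hab =≫ Pi.π _ i) =≫ limit.π _ u
    simpa only [L, Category.assoc, piObjIso_hom_comp_π, Pi.lift_π_assoc, limMap_π,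
      Functor.whiskerLeft_app] using this
  have hiso :
      IsIso ((piObjIso M t).hom ≫ Limits.Pi.map fun i => (toUnderline F T (M i)).app t) := by
    have := fun i => hM i t
    infer_instance
  rw [← hsq] at hiso
  exact isIso_of_isIso_comp_of_mono _ L hiso hL

end Semicontinuity

theorem Pi.linearIndependent_single_of_ne_zero' {K η : Type*} {Ms : η → Type*} [DivisionRing K]
    [∀ i, AddCommGroup (Ms i)] [∀ i, Module K (Ms i)] [DecidableEq η] {v : ∀ i, Ms i}
    (hv : ∀ i, v i ≠ 0) : LinearIndependent K fun i => Pi.single i (v i) := by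
  rw [← linearIndependent_equiv (Equiv.sigmaPUnit η)]
  exact Pi.linearIndependent_single (fun i (_ : Unit) => v i) fun i =>
    linearIndependent_unique_iff.mpr (hv i)

section Dual

variable {F T}

theorem ι_comp_fromOverline_app (M : PersistenceModule F T) (t : T) (u : {s : T // s < t}) :
    colimit.ι (downFunctor T t ⋙ M) u ≫ (fromOverline F T M).app t = M.map (homOfLE u.2.le) :=
  colimit.ι_desc _ _

noncomputable def piObjLinearEquiv {ι : Type} (M : ι → PersistenceModule F T) (t : T) :
    (∏ᶜ M).obj t ≃ₗ[F] ∀ i, (M i).obj t :=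
  (piObjIso M t ≪≫ ModuleCat.piIsoPi _).toLinearEquiv

theorem piObjLinearEquiv_apply {ι : Type} (M : ι → PersistenceModule F T) (t : T)
    (x : (∏ᶜ M).obj t) (i : ι) : piObjLinearEquiv M t x i = (Pi.π M i).app t x := by
  show (ModuleCat.piIsoPi _).hom ((piObjIso M t).hom x) i = _
  rw [ModuleCat.piIsoPi_hom_ker_subtype_apply]
  exact ConcreteCategory.congr_hom (piObjIso_hom_comp_π M t i) x

theorem piObjLinearEquiv_map {ι : Type} (M : ι → PersistenceModule F T) {s t : T} (h : s ≤ t)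
    (x : (∏ᶜ M).obj s) (i : ι) :
    piObjLinearEquiv M t ((∏ᶜ M).map (homOfLE h) x) i =
      (M i).map (homOfLE h) (piObjLinearEquiv M s x i) := by
  rw [piObjLinearEquiv_apply, piObjLinearEquiv_apply]
  exact ConcreteCategory.congr_hom ((Pi.π M i).naturality (homOfLE h)) x

theorem exists_comp_eq_of_surjective_fromOverline_dual [NoMaxOrder T] {M : PersistenceModule F T}
    {t : T}
    (hsurj : Function.Surjective ((fromOverline F Tᵒᵈ (dualPM F T M)).app (OrderDual.toDual t)))
    (φ : Module.Dual F (M.obj t)) :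
    ∃ s, ∃ hts : t < s, ∃ ψ : Module.Dual F (M.obj s), ψ ∘ₗ (M.map (homOfLE hts.le)).hom = φ := by
  -- makes the (directed) index category filtered, so that colimit elements have representatives
  have : Nonempty {s : Tᵒᵈ // s < OrderDual.toDual t} :=
    let ⟨s, hs⟩ := exists_lt (OrderDual.toDual t); ⟨⟨s, hs⟩⟩
  obtain ⟨x, rfl⟩ := hsurj φ
  obtain ⟨j, y, rfl⟩ := Concrete.colimit_exists_rep _ x
  exact ⟨OrderDual.ofDual j.1, OrderDual.lt_toDual.mp j.2, y,
    (ConcreteCategory.congr_hom (ι_comp_fromOverline_app _ _ j) y).symm⟩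

theorem not_isIso_fromOverline_dual_pi [NoMaxOrder T] {ι : Type} (M : ι → PersistenceModule F T)
    (t : T) (hne : ∀ i, Nontrivial ((M i).obj t))
    (hvanish : ∀ s, t < s → ∃ i, Subsingleton ((M i).obj s)) :
    ¬ IsIso ((fromOverline F Tᵒᵈ (dualPM F T (∏ᶜ M))).app (OrderDual.toDual t)) := by
  intro hiso
  choose g hg using fun i => @exists_ne _ (hne i) 0
  let v i := (piObjLinearEquiv M t).symm (Pi.single i (g i))
  have hv : LinearIndependent F v :=
    (Pi.linearIndependent_single_of_ne_zero' hg).map' _ (piObjLinearEquiv M t).symm.ker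
  obtain ⟨φ, hφ⟩ := Module.exists_dual_forall_apply_eq_one (hv.linearIndepOn Set.univ)
  obtain ⟨s, hts, ψ, rfl⟩ := exists_comp_eq_of_surjective_fromOverline_dual
    (ConcreteCategory.bijective_of_isIso _).2 φ
  obtain ⟨i, hi⟩ := hvanish s hts
  have hvi : ((∏ᶜ M).map (homOfLE hts.le)).hom (v i) = 0 := by
    refine (piObjLinearEquiv M s).injective (funext fun j => ?_)
    rw [piObjLinearEquiv_map, map_zero]
    rcases eq_or_ne j i with rfl | hji
    · exact Subsingleton.elim _ _
    · simp [v, Pi.single_eq_of_ne hji]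
  have h1 := hφ i (Set.mem_univ i)
  rw [LinearMap.comp_apply, hvi, map_zero] at h1
  exact zero_ne_one h1

end Dual

/-- `M = ∏ₙ C([0, 1/n))` is upper semi-continuous, but its pointwise dual `M*` (indexed
by `ℝᵒᵈ`) is not lower semi-continuous at `0`: the canonical map
`colim_{s < 0} (M*)_s → (M*)_0` is not an isomorphism. -/
theorem dual_of_prod_Ico_not_lsc_at_zero :
    IsUSC F ℝ (∏ᶜ fun n : ℕ => intervalModule F ℝ (Set.Ico (0:ℝ) (1/(n+1)))) ∧
    ¬ IsIso ((fromOverline F ℝᵒᵈ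
        (dualPM F ℝ (∏ᶜ fun n : ℕ => intervalModule F ℝ (Set.Ico (0:ℝ) (1/(n+1)))))).app
      (OrderDual.toDual (0:ℝ))) := by
  refine ⟨isUSC_pi _ fun n => isUSC_intervalModule_Ico _ _,
    not_isIso_fromOverline_dual_pi _ 0
      (fun n => intervalModule_obj_nontrivial ⟨le_rfl, by positivity⟩) fun s hs => ?_⟩
  obtain ⟨N, hN⟩ := exists_nat_one_div_lt hs
  exact ⟨N, intervalModule_obj_subsingleton fun h => lt_asymm h.2 hN⟩
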